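/- Every graphon W with a bounded clique number is countably-partite: there is a measurable partition Ω = Ω₁ ∪ Ω₂ ∪ … into countably many sets such that for each i, the restriction of W to Ω_i × Ω_i is 0 almost everywhere. -/

import Mathlib

open MeasureTheory

/-- The homomorphism density `t(K_k, W)` of the complete graph `K_k` in a graphon `W`. -/
noncomputable def cliqueDensity {Ω : Type*} [MeasurableSpace Ω] (μ : Measure Ω)
    (W : Ω → Ω → ℝ) (k : ℕ) : ENNReal :=
  ∫⁻ x : Fin k → Ω,
      ∏ p ∈ Finset.univ.filter (fun p : Fin k × Fin k => p.1 < p.2),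
        ENNReal.ofReal (W (x p.1) (x p.2))
    ∂(Measure.pi fun _ => μ)

open Set Function Filter
open scoped ENNReal

/-!
Write `N(a) = {b | 0 < W a b}`. Splitting off the first vertex of a clique shows that
`t(K_{k+1}, μ|_A) = 0` iff `t(K_k, μ|_{N(a) ∩ A}) = 0` for `μ|_A`-a.e. `a`. So if the clique density of
`μ|_A` vanishes at `k + 1`, either `μ (N(a) ∩ A) = 0` for a.e. `a ∈ A`, and then `W = 0` a.e. on
`A × A`, or some `N(a) ∩ A` has positive measure and vanishing clique density at `k`; induction on
`k` yields a positive-measure independent subset of every positive-measure set. A countable family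
of independent sets whose union has maximal measure then covers `Ω` up to a null set.
-/

section Exhaustion

variable {α : Type*} [MeasurableSpace α] {μ : Measure α}

theorem exists_seq_measure_compl_iUnion_eq_zero [IsFiniteMeasure μ] {p : Set α → Prop}
    (hp₀ : p ∅) (h : ∀ A, MeasurableSet A → μ A ≠ 0 → ∃ B ⊆ A, MeasurableSet B ∧ μ B ≠ 0 ∧ p B) :
    ∃ C : ℕ → Set α, (∀ n, MeasurableSet (C n) ∧ p (C n)) ∧ μ (⋃ n, C n)ᶜ = 0 := by
  set S : Set ℝ≥0∞ :=
    {m | ∃ C : ℕ → Set α, (∀ n, MeasurableSet (C n) ∧ p (C n)) ∧ μ (⋃ n, C n) = m}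
  obtain ⟨u, -, hu, huS⟩ := exists_seq_tendsto_sSup (S := S)
    ⟨_, fun _ => ∅, fun _ => ⟨.empty, hp₀⟩, rfl⟩ (OrderTop.bddAbove S)
  choose C hC hCu using huS
  set D : ℕ → Set α := fun n => C n.unpair.1 n.unpair.2
  have hD : ∀ n, MeasurableSet (D n) ∧ p (D n) := fun n => hC _ _
  have hD_max : μ (⋃ n, D n) = sSup S := by
    refine le_antisymm (le_sSup ⟨D, hD, rfl⟩) (le_of_tendsto' hu fun m => ?_)
    rw [← hCu m, iUnion_unpair]
    exact measure_mono (subset_iUnion (fun i => ⋃ j, C i j) m)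
  refine ⟨D, hD, ?_⟩
  by_contra hne
  obtain ⟨B, hBD, hB, hμB, hpB⟩ := h _ (MeasurableSet.iUnion fun n => (hD n).1).compl hne
  set E : ℕ → Set α := fun n => if n = 0 then B else D (n - 1)
  have hE : ∀ n, MeasurableSet (E n) ∧ p (E n) := fun n => by
    simp only [E]; split_ifs
    exacts [⟨hB, hpB⟩, hD _]
  have hDE : (⋃ n, D n) ∪ B ⊆ ⋃ n, E n := by
    refine union_subset (iUnion_subset fun n => ?_) ?_
    · exact subset_iUnion_of_subset (n + 1) (by simp [E])
    · exact subset_iUnion_of_subset 0 (by simp [E])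
  have hlt : sSup S < μ (⋃ n, E n) := calc
    sSup S = μ (⋃ n, D n) := hD_max.symm
    _ < μ (⋃ n, D n) + μ B := ENNReal.lt_add_right (measure_ne_top _ _) hμB
    _ = μ ((⋃ n, D n) ∪ B) := (measure_union (disjoint_compl_right.mono_right hBD) hB).symm
    _ ≤ μ (⋃ n, E n) := measure_mono hDE
  exact hlt.not_ge (le_sSup ⟨E, hE, rfl⟩)

end Exhaustion

section Graphon

variable {Ω : Type*} {W : Ω → Ω → ℝ}

noncomputable def cliqueWeight (W : Ω → Ω → ℝ) (k : ℕ) (x : Fin k → Ω) : ℝ≥0∞ :=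
  ∏ p ∈ Finset.univ.filter (fun p : Fin k × Fin k => p.1 < p.2),
    ENNReal.ofReal (W (x p.1) (x p.2))

lemma cliqueWeight_cons {k : ℕ} (a : Ω) (y : Fin k → Ω) :
    cliqueWeight W (k + 1) (Fin.cons a y) =
      (∏ j, ENNReal.ofReal (W a (y j))) * cliqueWeight W k y := by
  simp only [cliqueWeight, Finset.prod_filter, ← Finset.univ_product_univ, Finset.prod_product,
    Fin.prod_univ_succ, Fin.succ_pos, Fin.succ_lt_succ_iff, Fin.not_lt_zero, if_true, if_false,
    one_mul, Fin.cons_zero, Fin.cons_succ]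

lemma cliqueWeight_cons_eq_zero_iff {k : ℕ} (a : Ω) (y : Fin k → Ω) :
    cliqueWeight W (k + 1) (Fin.cons a y) = 0 ↔
      (univ.pi fun _ => {b | 0 < W a b}).indicator (cliqueWeight W k) y = 0 := by
  simp only [cliqueWeight_cons, mul_eq_zero, Finset.prod_eq_zero_iff, Finset.mem_univ, true_and,
    ENNReal.ofReal_eq_zero, indicator_apply_eq_zero, mem_univ_pi, mem_ofPred_eq]
  rw [imp_iff_not_or, not_forall]
  simp only [not_lt]

variable [MeasurableSpace Ω] {μ : Measure Ω}

lemma measurable_cliqueWeight (hW : Measurable (uncurry W)) (k : ℕ) :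
    Measurable (cliqueWeight W k) :=
  Finset.measurable_prod _ fun p _ =>
    (hW.comp (f := fun x : Fin k → Ω => (x p.1, x p.2)) (by fun_prop)).ennreal_ofReal

lemma measurable_finCons_uncurry {k : ℕ} :
    Measurable fun z : Ω × (Fin k → Ω) => (Fin.cons z.1 z.2 : Fin (k + 1) → Ω) :=
  measurable_pi_lambda _ fun i => by
    refine Fin.cases ?_ (fun j => ?_) i <;> simp only [Fin.cons_zero, Fin.cons_succ] <;> fun_prop

lemma cliqueDensity_eq_lintegral_cliqueWeight (k : ℕ) :
    cliqueDensity μ W k = ∫⁻ x, cliqueWeight W k x ∂(Measure.pi fun _ => μ) := rfl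

lemma cliqueDensity_zero [SigmaFinite μ] : cliqueDensity μ W 0 = 1 := by
  simp [cliqueDensity]

lemma cliqueDensity_succ [SigmaFinite μ] (hW : Measurable (uncurry W)) (k : ℕ) :
    cliqueDensity μ W (k + 1) =
      ∫⁻ a, ∫⁻ y, cliqueWeight W (k + 1) (Fin.cons a y) ∂(Measure.pi fun _ => μ) ∂μ := by
  let e := (MeasurableEquiv.piFinSuccAbove (fun _ : Fin (k + 1) => Ω) 0).symm
  rw [cliqueDensity_eq_lintegral_cliqueWeight, ← ((measurePreserving_piFinSuccAbove
    (fun _ => μ) 0).symm).lintegral_comp_emb e.measurableEmbedding,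
    lintegral_prod (fun z => cliqueWeight W (k + 1) (e z))
      ((measurable_cliqueWeight hW _).comp e.measurable).aemeasurable]
  simp [e, MeasurableEquiv.piFinSuccAbove_symm_apply, Fin.insertNthEquiv]

lemma lintegral_cliqueWeight_cons_eq_zero_iff [SigmaFinite μ] (hW : Measurable (uncurry W))
    (a : Ω) (k : ℕ) :
    ∫⁻ y, cliqueWeight W (k + 1) (Fin.cons a y) ∂(Measure.pi fun _ => μ) = 0 ↔
      cliqueDensity (μ.restrict {b | 0 < W a b}) W k = 0 := by
  have hN : MeasurableSet {b | 0 < W a b} :=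
    measurableSet_lt measurable_const (hW.comp measurable_prodMk_left)
  have hf : Measurable fun y : Fin k → Ω => cliqueWeight W (k + 1) (Fin.cons a y) :=
    (measurable_cliqueWeight hW _).comp (measurable_finCons_uncurry.comp measurable_prodMk_left)
  rw [cliqueDensity_eq_lintegral_cliqueWeight, ← Measure.restrict_pi_pi,
    ← lintegral_indicator (.univ_pi fun _ => hN), lintegral_eq_zero_iff hf,
    lintegral_eq_zero_iff ((measurable_cliqueWeight hW k).indicator (.univ_pi fun _ => hN))]
  simp only [EventuallyEq, Pi.zero_apply, cliqueWeight_cons_eq_zero_iff]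

lemma cliqueDensity_succ_eq_zero_iff [SigmaFinite μ] (hW : Measurable (uncurry W)) (k : ℕ) :
    cliqueDensity μ W (k + 1) = 0 ↔
      ∀ᵐ a ∂μ, cliqueDensity (μ.restrict {b | 0 < W a b}) W k = 0 := by
  have hg : Measurable fun a => ∫⁻ y, cliqueWeight W (k + 1) (Fin.cons a y)
      ∂(Measure.pi fun _ => μ) :=
    ((measurable_cliqueWeight hW _).comp measurable_finCons_uncurry).lintegral_prod_right'
  rw [cliqueDensity_succ hW, lintegral_eq_zero_iff hg]
  simp only [EventuallyEq, Pi.zero_apply, lintegral_cliqueWeight_cons_eq_zero_iff hW]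

lemma cliqueDensity_restrict_le [SigmaFinite μ] (A : Set Ω) (k : ℕ) :
    cliqueDensity (μ.restrict A) W k ≤ cliqueDensity μ W k := by
  rw [cliqueDensity_eq_lintegral_cliqueWeight, ← Measure.restrict_pi_pi]
  exact lintegral_mono' Measure.restrict_le_self le_rfl

def IsAEIndepSet (μ : Measure Ω) (W : Ω → Ω → ℝ) (B : Set Ω) : Prop :=
  ∀ᵐ z ∂(μ.prod μ), z.1 ∈ B → z.2 ∈ B → W z.1 z.2 = 0

lemma isAEIndepSet_empty : IsAEIndepSet μ W ∅ :=
  Eventually.of_forall fun _ h => absurd h (notMem_empty _)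

lemma IsAEIndepSet.mono {B C : Set Ω} (hB : IsAEIndepSet μ W B) (hCB : C ⊆ B) :
    IsAEIndepSet μ W C := by
  filter_upwards [hB] with z hz h1 h2 using hz (hCB h1) (hCB h2)

lemma IsAEIndepSet.union_null [SFinite μ] {B R : Set Ω} (hB : IsAEIndepSet μ W B)
    (hR : μ R = 0) : IsAEIndepSet μ W (B ∪ R) := by
  have hR' := measure_eq_zero_iff_ae_notMem.1 hR
  have h1 : ∀ᵐ z ∂(μ.prod μ), z.1 ∉ R := Measure.quasiMeasurePreserving_fst.ae hR'
  have h2 : ∀ᵐ z ∂(μ.prod μ), z.2 ∉ R := Measure.quasiMeasurePreserving_snd.ae hR'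
  filter_upwards [hB, h1, h2] with z hz hz1 hz2 hm1 hm2
  exact hz (hm1.resolve_right hz1) (hm2.resolve_right hz2)

lemma isAEIndepSet_of_ae_measure_neighbourhood_eq_zero [SFinite μ]
    (hW : Measurable (uncurry W)) (h0 : ∀ x y, 0 ≤ W x y) {A : Set Ω} (hA : MeasurableSet A)
    (h : ∀ᵐ a ∂μ.restrict A, μ ({b | 0 < W a b} ∩ A) = 0) : IsAEIndepSet μ W A := by
  have hm : MeasurableSet {z : Ω × Ω | z.1 ∈ A → z.2 ∈ A → W z.1 z.2 = 0} :=
    (measurable_fst hA).imp ((measurable_snd hA).imp (measurableSet_eq_fun hW measurable_const))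
  refine (Measure.ae_prod_mem_iff_ae_ae_mem hm).2 ?_
  filter_upwards [(ae_restrict_iff' hA).1 h] with a ha
  by_cases haA : a ∈ A
  · filter_upwards [measure_eq_zero_iff_ae_notMem.1 (ha haA)] with b hb _ hbA
    exact le_antisymm (not_lt.1 fun hpos => hb ⟨hpos, hbA⟩) (h0 a b)
  · exact Eventually.of_forall fun b h => absurd h haA

theorem exists_subset_isAEIndepSet_of_cliqueDensity_restrict_eq_zero [SigmaFinite μ]
    (hW : Measurable (uncurry W)) (h0 : ∀ x y, 0 ≤ W x y) (k : ℕ) {A : Set Ω}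
    (hA : MeasurableSet A) (hμA : μ A ≠ 0) (hk : cliqueDensity (μ.restrict A) W k = 0) :
    ∃ B ⊆ A, MeasurableSet B ∧ μ B ≠ 0 ∧ IsAEIndepSet μ W B := by
  induction k generalizing A with
  | zero => exact absurd hk (by simp [cliqueDensity_zero])
  | succ k ih =>
    have hN : ∀ a, MeasurableSet {b | 0 < W a b} := fun a =>
      measurableSet_lt measurable_const (hW.comp measurable_prodMk_left)
    rw [cliqueDensity_succ_eq_zero_iff hW] at hk
    simp only [Measure.restrict_restrict (hN _)] at hk
    by_cases hsparse : ∀ᵐ a ∂μ.restrict A, μ ({b | 0 < W a b} ∩ A) = 0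
    · exact ⟨A, subset_rfl, hA, hμA,
        isAEIndepSet_of_ae_measure_neighbourhood_eq_zero hW h0 hA hsparse⟩
    · obtain ⟨a, ha, hak⟩ := ((Filter.not_eventually.1 hsparse).and_eventually hk).exists
      obtain ⟨B, hBA, hB⟩ := ih ((hN a).inter hA) ha hak
      exact ⟨B, hBA.trans inter_subset_right, hB⟩

end Graphon

theorem bounded_clique_number_countably_partite_general {Ω : Type*} [MeasurableSpace Ω]
    (μ : Measure Ω) [IsProbabilityMeasure μ]
    (W : Ω → Ω → ℝ) (hW : Measurable (Function.uncurry W))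
    (h0 : ∀ x y, 0 ≤ W x y)
    (hbdd : ∃ L : ℕ, ∀ k, L < k → cliqueDensity μ W k = 0) :
    ∃ P : ℕ → Set Ω, (∀ i, MeasurableSet (P i)) ∧
      (∀ i j, i ≠ j → Disjoint (P i) (P j)) ∧ (⋃ i, P i) = Set.univ ∧
      ∀ i, ∀ᵐ z ∂(μ.prod μ), z.1 ∈ P i → z.2 ∈ P i → W z.1 z.2 = 0 := by
  obtain ⟨L, hL⟩ := hbdd
  have hsplit : ∀ A, MeasurableSet A → μ A ≠ 0 →
      ∃ B ⊆ A, MeasurableSet B ∧ μ B ≠ 0 ∧ IsAEIndepSet μ W B := fun A hA hμA =>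
    exists_subset_isAEIndepSet_of_cliqueDensity_restrict_eq_zero hW h0 (L + 1) hA hμA <|
      nonpos_iff_eq_zero.1 <| (cliqueDensity_restrict_le A _).trans_eq (hL _ L.lt_succ_self)
  obtain ⟨C, hC, hnull⟩ := exists_seq_measure_compl_iUnion_eq_zero isAEIndepSet_empty hsplit
  have hR : MeasurableSet (⋃ n, C n)ᶜ := (MeasurableSet.iUnion fun n => (hC n).1).compl
  refine ⟨disjointed fun n => C n ∪ (⋃ m, C m)ᶜ,
    MeasurableSet.disjointed fun n => (hC n).1.union hR, fun _ _ hij => disjoint_disjointed _ hij,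
    ?_, fun n => ((hC n).2.union_null hnull).mono (disjointed_subset _ n)⟩
  rw [iUnion_disjointed, ← iUnion_union, union_compl_self]

/-- Every graphon with a bounded clique number (i.e. `t(K_k, W) = 0` for all large `k`)
is countably-partite: there is a countable measurable partition `Ω = Ω₀ ∪ Ω₁ ∪ …` such
that `W` vanishes a.e. on each `Ω_i × Ω_i`. -/
theorem bounded_clique_number_countably_partite {Ω : Type*} [MeasurableSpace Ω]
    [StandardBorelSpace Ω] (μ : Measure Ω) [IsProbabilityMeasure μ] [NullSingletonClass μ]
    (W : Ω → Ω → ℝ) (hW : Measurable (Function.uncurry W))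
    (hsymm : ∀ x y, W x y = W y x) (h0 : ∀ x y, 0 ≤ W x y) (h1 : ∀ x y, W x y ≤ 1)
    (hbdd : ∃ L : ℕ, ∀ k, L < k → cliqueDensity μ W k = 0) :
    ∃ P : ℕ → Set Ω, (∀ i, MeasurableSet (P i)) ∧
      (∀ i j, i ≠ j → Disjoint (P i) (P j)) ∧ (⋃ i, P i) = Set.univ ∧
      ∀ i, ∀ᵐ z ∂(μ.prod μ), z.1 ∈ P i → z.2 ∈ P i → W z.1 z.2 = 0 :=
  bounded_clique_number_countably_partite_general μ W hW h0 hbdd
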